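/- Let p > 1, κ > 0, k₁ > 0 and T ≥ 0. Suppose y : [T,∞) → [0,∞) is differentiable and satisfies y'(t) ≤ κ p·y(t) − k₁·y(t)^{1+1/p} for all t > T. Then for all t ≥ T + 1 one has y(t) ≤ [ (k₁/(κ p))·(1 − e^{−κ}) ]^{−p}. -/

import Mathlib

/-!
If `y` vanishes somewhere in `[t - 1, t]`, the linear bound `y' ≤ κ p y` keeps it zero up to `t`.
Otherwise `u = y ^ (-1/p)` satisfies the linear inequality `u' ≥ -κ (u - k₁ / (κ p))`, so
`exp (κ s) * (u s - k₁ / (κ p))` increases on `[t - 1, t]`. Since `u ≥ 0`, this gives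
`u t ≥ (k₁ / (κ p)) (1 - exp (-κ))` whatever the size of `y (t - 1)`.
-/

open Real Set

theorem antitoneOn_exp_neg_mul_of_hasDerivAt_le {v v' : ℝ → ℝ} {L a b : ℝ}
    (hv : ContinuousOn v (Icc a b)) (hv' : ∀ t ∈ Ioo a b, HasDerivAt v (v' t) t)
    (hle : ∀ t ∈ Ioo a b, v' t ≤ L * v t) :
    AntitoneOn (fun t => exp (-L * t) * v t) (Icc a b) := by
  have hexp : ∀ t, HasDerivAt (fun t => exp (-L * t)) (exp (-L * t) * -L) t := fun t => by
    simpa using ((hasDerivAt_id t).const_mul (-L)).exp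
  refine antitoneOn_of_hasDerivWithinAt_nonpos (convex_Icc a b)
    (f' := fun t => exp (-L * t) * -L * v t + exp (-L * t) * v' t)
    ((continuous_exp.comp (continuous_const.mul continuous_id)).continuousOn.mul hv)
    (fun t ht => ?_) (fun t ht => ?_)
  · rw [interior_Icc] at ht ⊢
    exact ((hexp t).mul (hv' t ht)).hasDerivWithinAt
  · rw [interior_Icc] at ht
    have := hle t ht
    have := exp_pos (-L * t)
    nlinarith

theorem eq_zero_of_hasDerivAt_le_mul {v v' : ℝ → ℝ} {L a b : ℝ} (hab : a ≤ b)
    (hv : ContinuousOn v (Icc a b)) (hv' : ∀ t ∈ Ioo a b, HasDerivAt v (v' t) t)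
    (hle : ∀ t ∈ Ioo a b, v' t ≤ L * v t) (ha : v a = 0) (hb : 0 ≤ v b) : v b = 0 := by
  have := antitoneOn_exp_neg_mul_of_hasDerivAt_le hv hv' hle
    (left_mem_Icc.2 hab) (right_mem_Icc.2 hab) hab
  simp only [ha, mul_zero] at this
  have := exp_pos (-L * b)
  nlinarith

section Bernoulli

variable {p κ k₁ : ℝ}

/- `-p⁻¹ * y ^ (-p⁻¹ - 1) * y'` is the derivative of the Bernoulli substitution
`u = y ^ (-p⁻¹)`, which makes the differential inequality linear in `u`. -/
theorem inv_mul_rpow_mul_le {y y' : ℝ} (hp : 0 < p) (hy : 0 < y)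
    (h : y' ≤ κ * p * y - k₁ * y ^ (1 + 1 / p)) :
    p⁻¹ * (y ^ (-p⁻¹ - 1) * y') ≤ κ * y ^ (-p⁻¹) - k₁ / p := by
  have hw : 0 ≤ p⁻¹ * y ^ (-p⁻¹ - 1) := by positivity
  have e1 : y ^ (-p⁻¹ - 1) * y = y ^ (-p⁻¹) := by
    rw [← rpow_add_one hy.ne']; ring_nf
  have e2 : y ^ (-p⁻¹ - 1) * y ^ (1 + 1 / p) = 1 := by
    rw [← rpow_add hy]; ring_nf; exact rpow_zero y
  calc p⁻¹ * (y ^ (-p⁻¹ - 1) * y')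
      = p⁻¹ * y ^ (-p⁻¹ - 1) * y' := by ring
    _ ≤ p⁻¹ * y ^ (-p⁻¹ - 1) * (κ * p * y - k₁ * y ^ (1 + 1 / p)) :=
        mul_le_mul_of_nonneg_left h hw
    _ = p⁻¹ * (κ * p * (y ^ (-p⁻¹ - 1) * y)
          - k₁ * (y ^ (-p⁻¹ - 1) * y ^ (1 + 1 / p))) := by ring
    _ = κ * y ^ (-p⁻¹) - k₁ / p := by
        rw [e1, e2]; field_simp

theorem mul_one_sub_exp_le_rpow_neg_inv {y y' : ℝ → ℝ} {a b : ℝ} (hp : 0 < p) (hκ : 0 < κ)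
    (hab : a ≤ b) (hpos : ∀ t ∈ Icc a b, 0 < y t)
    (hy : ContinuousOn y (Icc a b)) (hy' : ∀ t ∈ Ioo a b, HasDerivAt y (y' t) t)
    (hineq : ∀ t ∈ Ioo a b, y' t ≤ κ * p * y t - k₁ * y t ^ (1 + 1 / p)) :
    k₁ / (κ * p) * (1 - exp (-(κ * (b - a)))) ≤ y b ^ (-p⁻¹) := by
  set c := k₁ / (κ * p)
  set v : ℝ → ℝ := fun t => c - y t ^ (-p⁻¹)
  have hv : ContinuousOn v (Icc a b) := continuousOn_const.sub
    (hy.rpow_const fun t ht => Or.inl (hpos t ht).ne')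
  have hv' : ∀ t ∈ Ioo a b,
      HasDerivAt v (-(y' t * -p⁻¹ * y t ^ (-p⁻¹ - 1))) t := fun t ht =>
    ((hy' t ht).rpow_const (Or.inl (hpos t (Ioo_subset_Icc_self ht)).ne')).const_sub c
  have hle : ∀ t ∈ Ioo a b, -(y' t * -p⁻¹ * y t ^ (-p⁻¹ - 1)) ≤ -κ * v t := by
    intro t ht
    have := inv_mul_rpow_mul_le hp (hpos t (Ioo_subset_Icc_self ht)) (hineq t ht)
    have hc : κ * c = k₁ / p := by simp only [c]; field_simp
    simp only [v]
    linarith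
  have hmono := antitoneOn_exp_neg_mul_of_hasDerivAt_le hv hv' hle
    (left_mem_Icc.2 hab) (right_mem_Icc.2 hab) hab
  simp only [neg_neg, v] at hmono
  have hu : 0 ≤ y a ^ (-p⁻¹) := rpow_nonneg (hpos a (left_mem_Icc.2 hab)).le _
  have hE : exp (κ * a) = exp (κ * b) * exp (-(κ * (b - a))) := by
    rw [← exp_add]; ring_nf
  rw [hE] at hmono
  have hdecay : c - y b ^ (-p⁻¹) ≤ exp (-(κ * (b - a))) * c := by
    refine le_of_mul_le_mul_left ?_ (exp_pos (κ * b))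
    nlinarith [mul_nonneg (mul_nonneg (exp_pos (κ * b)).le (exp_pos (-(κ * (b - a)))).le) hu]
  linarith

end Bernoulli

theorem ode_comparison_superlinear_general
    (p κ k₁ T : ℝ) (hp : 1 < p) (hκ : 0 < κ) (hk₁ : 0 < k₁)
    (y y' : ℝ → ℝ)
    (hynn : ∀ t, T ≤ t → 0 ≤ y t)
    (hderiv : ∀ t, T ≤ t → HasDerivWithinAt y (y' t) (Ici T) t)
    (hineq : ∀ t, T < t → y' t ≤ κ * p * y t - k₁ * y t ^ (1 + 1 / p)) :
    ∀ t, T + 1 ≤ t → y t ≤ (k₁ / (κ * p) * (1 - Real.exp (-κ))) ^ (-p) := by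
  intro t ht
  have hp₀ : 0 < p := by linarith
  have hTa : T ≤ t - 1 := by linarith
  have hy : ContinuousOn y (Icc (t - 1) t) := fun s hs =>
    (hderiv s (hTa.trans hs.1)).continuousWithinAt.mono fun r hr => hTa.trans hr.1
  have hy' : ∀ s ∈ Ioo (t - 1) t, HasDerivAt y (y' s) s := fun s hs =>
    (hderiv s (by linarith [hs.1])).hasDerivAt (Ici_mem_nhds (by linarith [hs.1]))
  have hineq' : ∀ s ∈ Ioo (t - 1) t, y' s ≤ κ * p * y s - k₁ * y s ^ (1 + 1 / p) :=
    fun s hs => hineq s (by linarith [hs.1])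
  have hbound : 0 < k₁ / (κ * p) * (1 - exp (-κ)) := by
    have : exp (-κ) < 1 := exp_lt_one_iff.2 (by linarith)
    have : 0 < k₁ / (κ * p) := by positivity
    nlinarith
  by_cases hzero : ∃ s ∈ Icc (t - 1) t, y s = 0
  · obtain ⟨s, hs, hys⟩ := hzero
    have hlin : ∀ r ∈ Ioo s t, y' r ≤ κ * p * y r := fun r hr => by
      have hr' : r ∈ Ioo (t - 1) t := ⟨hs.1.trans_lt hr.1, hr.2⟩
      have := hineq' r hr'
      have := rpow_nonneg (hynn r (by linarith [hr'.1])) (1 + 1 / p)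
      nlinarith
    have hyt : y t = 0 := eq_zero_of_hasDerivAt_le_mul hs.2
      (hy.mono (Icc_subset_Icc hs.1 le_rfl)) (fun r hr => hy' r ⟨hs.1.trans_lt hr.1, hr.2⟩)
      hlin hys (hynn t (by linarith))
    rw [hyt]
    positivity
  · push Not at hzero
    have hpos : ∀ s ∈ Icc (t - 1) t, 0 < y s := fun s hs =>
      (hynn s (hTa.trans hs.1)).lt_of_ne (hzero s hs).symm
    have hu := mul_one_sub_exp_le_rpow_neg_inv hp₀ hκ (by linarith) hpos hy hy' hineq'
    rw [sub_sub_cancel, mul_one] at hu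
    have hyt : y t = (y t ^ (-p⁻¹)) ^ (-p) := by
      rw [← rpow_mul (hynn t (by linarith)), neg_mul_neg, inv_mul_cancel₀ hp₀.ne', rpow_one]
    rw [hyt]
    exact rpow_le_rpow_of_nonpos hbound hu (by linarith)

theorem ode_comparison_superlinear
    (p κ k₁ T : ℝ) (hp : 1 < p) (hκ : 0 < κ) (hk₁ : 0 < k₁) (hT : 0 ≤ T)
    (y y' : ℝ → ℝ)
    (hynn : ∀ t, T ≤ t → 0 ≤ y t)
    (hderiv : ∀ t, T ≤ t → HasDerivWithinAt y (y' t) (Ici T) t)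
    (hineq : ∀ t, T < t → y' t ≤ κ * p * y t - k₁ * y t ^ (1 + 1 / p)) :
    ∀ t, T + 1 ≤ t → y t ≤ (k₁ / (κ * p) * (1 - Real.exp (-κ))) ^ (-p) :=
  ode_comparison_superlinear_general p κ k₁ T hp hκ hk₁ y y' hynn hderiv hineq
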